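/- Let U ⊆ ℝ^m be open, F : U → ℝ^ℓ smooth with ℓ > 2n, N a compact smooth n-manifold, and f : N → U a smooth embedding. Then there exists a set Σ ⊆ L(ℝ^m, ℝ^ℓ) of measure zero such that for every π ∉ Σ, (F + π)∘f : N → ℝ^ℓ is a smooth embedding. -/

import Mathlib

open MeasureTheory Manifold Set Module
open scoped ENNReal NNReal

/-- Transfer: a set of Hausdorff dimension `< ℓ*m` in the matrix space is volume-null. -/
lemma aux_vol_zero {ℓ m : ℕ} (s : Set (Fin ℓ → Fin m → ℝ))
    (hs : dimH s < ((ℓ * m : ℕ) : ℝ≥0∞)) : volume s = 0 := by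
  have hrank : finrank ℝ (Fin ℓ → Fin m → ℝ) = ℓ * m := by
    simp [Module.finrank_pi_fintype]
  let ψ : (Fin ℓ → Fin m → ℝ) ≃L[ℝ] (Fin (ℓ * m) → ℝ) :=
    ContinuousLinearEquiv.ofFinrankEq (by simp [hrank])
  have h1 : dimH (⇑ψ '' s) = dimH s := ψ.dimH_image s
  have h2 : (μH[(ℓ * m : ℕ)] : Measure (Fin (ℓ * m) → ℝ)) (⇑ψ '' s) = 0 := by
    apply hausdorffMeasure_of_dimH_lt (d := ((ℓ * m : ℕ) : ℝ≥0))
    · rw [h1]; exact_mod_cast hs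
  have h3 : volume (⇑ψ '' s) = 0 := by
    rw [← hausdorffMeasure_pi_real (ι := Fin (ℓ * m))] at *
    simpa using h2
  set t := toMeasurable volume (⇑ψ '' s) with ht_def
  have ht0 : volume t = 0 := by rw [measure_toMeasurable]; exact h3
  have hsub : s ⊆ ⇑ψ ⁻¹' t := fun x hx => subset_toMeasurable _ _ ⟨x, hx, rfl⟩
  refine measure_mono_null hsub ?_
  haveI : (volume : Measure (Fin ℓ → Fin m → ℝ)).IsAddHaarMeasure := Measure.pi.isAddHaarMeasure _
  haveI : ((volume : Measure (Fin ℓ → Fin m → ℝ)).map ψ).IsAddHaarMeasure :=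
    ContinuousLinearEquiv.isAddHaarMeasure_map ψ _
  have hmap : (volume : Measure (Fin ℓ → Fin m → ℝ)).map ψ
      = Measure.addHaarScalarFactor ((volume : Measure (Fin ℓ → Fin m → ℝ)).map ψ)
          (volume : Measure (Fin (ℓ*m) → ℝ)) • volume :=
    Measure.isAddLeftInvariant_eq_smul _ _
  have : ((volume : Measure (Fin ℓ → Fin m → ℝ)).map ψ) t = 0 := by
    rw [hmap]; simp [ht0]
  rwa [Measure.map_apply ψ.continuous.measurable (measurableSet_toMeasurable _ _)] at this


/-- The engine: a `C¹` image of the "column `j0` equals zero" slice of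
`ℝⁿ × ℝⁿ × (matrix space)` is volume-null when `2n < ℓ`. -/
lemma aux_engine {ℓ m n : ℕ} (hl : 2 * n < ℓ) (j0 : Fin m)
    {D : Set ((Fin n → ℝ) × (Fin n → ℝ) × (Fin ℓ → Fin m → ℝ))} (hD : IsOpen D)
    {Ψ : ((Fin n → ℝ) × (Fin n → ℝ) × (Fin ℓ → Fin m → ℝ)) → (Fin ℓ → Fin m → ℝ)}
    (hΨ : ContDiffOn ℝ 1 Ψ D) :
    volume (Ψ '' (D ∩ {p | ∀ i, p.2.2 i j0 = 0})) = 0 := by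
  let E := (Fin n → ℝ) × (Fin n → ℝ) × (Fin ℓ → Fin m → ℝ)
  set Φ : E →ₗ[ℝ] (Fin ℓ → ℝ) :=
    { toFun := fun p => fun i => p.2.2 i j0
      map_add' := fun p q => rfl
      map_smul' := fun c p => rfl } with hΦ
  have hΦapp : ∀ p : E, Φ p = fun i => p.2.2 i j0 := fun p => rfl
  have hsurj : Function.Surjective Φ := by
    intro y
    refine ⟨(0, 0, fun i j => if j = j0 then y i else 0), ?_⟩
    rw [hΦapp]; funext i; simp
  set S := LinearMap.ker Φ with hS
  have hker : {p : E | ∀ i, p.2.2 i j0 = 0} = (S : Set E) := by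
    ext p; simp [hS, LinearMap.mem_ker, hΦapp, funext_iff]
  -- dimension of the kernel
  have hrankE : finrank ℝ E = 2 * n + ℓ * m := by
    show finrank ℝ ((Fin n → ℝ) × (Fin n → ℝ) × (Fin ℓ → Fin m → ℝ)) = _
    simp [Module.finrank_prod, Module.finrank_pi_fintype]
    ring
  have hrn : finrank ℝ (LinearMap.range Φ) + finrank ℝ S = finrank ℝ E :=
    LinearMap.finrank_range_add_finrank_ker Φ
  have hrange : finrank ℝ (LinearMap.range Φ) = ℓ := by
    rw [LinearMap.range_eq_top.2 hsurj, finrank_top]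
    simp [Module.finrank_pi_fintype]
  have hd : finrank ℝ S < ℓ * m := by
    have h1 : ℓ ≤ ℓ * m := Nat.le_mul_of_pos_right ℓ j0.pos
    rw [hrange, hrankE] at hrn
    omega
  -- Hausdorff dimension estimate
  apply aux_vol_zero
  have h1 : dimH ((S : Set E)) ≤ (finrank ℝ S : ℝ≥0∞) := by
    have : (S : Set E) = Subtype.val '' (univ : Set S) := by simp
    rw [this]
    calc dimH (Subtype.val '' (univ : Set S))
        ≤ dimH (univ : Set S) :=
          ((isometry_subtype_coe).lipschitz).dimH_image_le _
      _ = (finrank ℝ S : ℝ≥0∞) := by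
          rw [Real.dimH_univ_eq_finrank]
  have h2 : dimH (D ∩ {p : E | ∀ i, p.2.2 i j0 = 0}) ≤ (finrank ℝ S : ℝ≥0∞) :=
    le_trans (by rw [hker]; exact dimH_mono inter_subset_right) h1
  have h3 : dimH (Ψ '' (D ∩ {p : E | ∀ i, p.2.2 i j0 = 0})) ≤ (finrank ℝ S : ℝ≥0∞) := by
    refine le_trans (dimH_image_le_of_locally_lipschitzOn ?_) h2
    intro x hx
    obtain ⟨K, t, ht, hlip⟩ := (hΨ.contDiffAt (hD.mem_nhds hx.1)).exists_lipschitzOnWith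
    exact ⟨K, t, mem_nhdsWithin_of_mem_nhds ht, hlip⟩
  refine lt_of_le_of_lt h3 ?_
  exact_mod_cast hd

/-- Solving for the `j0` column of a matrix from the linear relation `α · u = c`. -/
lemma solve_col {m ℓ : ℕ} (α : Fin ℓ → Fin m → ℝ) (u : Fin m → ℝ) (c : Fin ℓ → ℝ)
    (j0 : Fin m) (hu : u j0 ≠ 0) (h : ∀ i, (∑ j, α i j * u j) = c i) (i : Fin ℓ) (j : Fin m) :
    (if j = j0 then
        (c i - ∑ j', (if j' = j0 then (0:ℝ) else α i j') * u j') / u j0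
      else if j = j0 then (0:ℝ) else α i j) = α i j := by
  by_cases hj : j = j0
  · subst hj
    simp only [if_pos rfl]
    have hsum : ∑ j', (if j' = j then (0:ℝ) else α i j') * u j'
        = c i - α i j * u j := by
      have e1 : (fun j' => (if j' = j then (0:ℝ) else α i j') * u j')
          = fun j' => α i j' * u j' - (if j' = j then α i j' * u j' else 0) := by
        funext j'
        by_cases hj' : j' = j <;> simp [hj']
      rw [e1, Finset.sum_sub_distrib, Finset.sum_ite_eq' Finset.univ j
        (fun j' => α i j' * u j'), h i]
      simp
    rw [hsum]
    simp only [if_true]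
    field_simp
    ring
  · simp [hj]


/-- let `U ⊆ ℝᵐ` be open, `F : U → ℝˡ` smooth with `ℓ > 2n`,
`N` a compact smooth `n`-manifold, and `f : N → U` a smooth embedding
(a smooth immersion which is a topological embedding).  Then for almost
every linear map `π ∈ L(ℝᵐ,ℝˡ)` (identified with its matrix `α`), the
composition `(F + π) ∘ f : N → ℝˡ` is a smooth embedding. -/
theorem stmt8 {m ℓ n : ℕ} (hl : 2 * n < ℓ)
    (U : Set (Fin m → ℝ)) (hU : IsOpen U)
    (F : (Fin m → ℝ) → (Fin ℓ → ℝ)) (hF : ContDiffOn ℝ (⊤ : ℕ∞) F U)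
    {N : Type*} [TopologicalSpace N] [ChartedSpace (Fin n → ℝ) N]
    [IsManifold 𝓘(ℝ, Fin n → ℝ) (⊤ : ℕ∞) N] [CompactSpace N]
    (f : N → (Fin m → ℝ)) (hfU : ∀ q, f q ∈ U)
    (hf : ContMDiff 𝓘(ℝ, Fin n → ℝ) 𝓘(ℝ, Fin m → ℝ) (⊤ : ℕ∞) f)
    (himm : ∀ q, Function.Injective
      (mfderiv 𝓘(ℝ, Fin n → ℝ) 𝓘(ℝ, Fin m → ℝ) f q))
    (htop : Topology.IsEmbedding f) :
    ∃ Sig : Set (Fin ℓ → Fin m → ℝ), volume Sig = 0 ∧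
      ∀ α ∉ Sig,
        ContMDiff 𝓘(ℝ, Fin n → ℝ) 𝓘(ℝ, Fin ℓ → ℝ) (⊤ : ℕ∞)
          (fun q => F (f q) + fun i => ∑ j, α i j * f q j) ∧
        (∀ q, Function.Injective
          (mfderiv 𝓘(ℝ, Fin n → ℝ) 𝓘(ℝ, Fin ℓ → ℝ)
            (fun q => F (f q) + fun i => ∑ j, α i j * f q j) q)) ∧
        Topology.IsEmbedding
          (fun q : N => F (f q) + fun i => ∑ j, α i j * f q j) := by
  classical
  -- the linear map attached to a matrix
  set A : (Fin ℓ → Fin m → ℝ) → ((Fin m → ℝ) →L[ℝ] (Fin ℓ → ℝ)) :=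
    fun α => LinearMap.toContinuousLinearMap (Matrix.mulVecLin α) with hA
  have hAapp : ∀ α (x : Fin m → ℝ), A α x = fun i => ∑ j, α i j * x j := by
    intro α x
    funext i
    simp [hA, Matrix.mulVecLin_apply, Matrix.mulVec, dotProduct]
    rfl
  set g : (Fin ℓ → Fin m → ℝ) → N → (Fin ℓ → ℝ) :=
    fun α q => F (f q) + A α (f q) with hg
  have hg_eq : ∀ α, (fun q => F (f q) + fun i => ∑ j, α i j * f q j) = g α := by
    intro α
    funext q
    rw [hg]
    simp only [hAapp]
  -- smoothness for all `α`
  have hgsmooth : ∀ α, ContMDiff 𝓘(ℝ, Fin n → ℝ) 𝓘(ℝ, Fin ℓ → ℝ) (⊤ : ℕ∞) (g α) := by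
    intro α
    have h1 : ContMDiff 𝓘(ℝ, Fin n → ℝ) 𝓘(ℝ, Fin ℓ → ℝ) (⊤ : ℕ∞) (fun q => F (f q)) :=
      ((hF.of_le (by simp)).contMDiffOn (n := (⊤ : ℕ∞))).comp_contMDiff hf hfU
    have h2 : ContMDiff 𝓘(ℝ, Fin n → ℝ) 𝓘(ℝ, Fin ℓ → ℝ) (⊤ : ℕ∞) (fun q => A α (f q)) :=
      (((A α).contDiff).contMDiff).comp hf
    exact h1.add h2
  -- differentiability of `F` inside `U`
  have hFd : ∀ x ∈ U, DifferentiableAt ℝ F x := fun x hx =>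
    (hF.contDiffAt (hU.mem_nhds hx)).differentiableAt (by simp)
  -- the derivative formula
  have hmfd : ∀ α q, mfderiv 𝓘(ℝ, Fin n → ℝ) 𝓘(ℝ, Fin ℓ → ℝ) (g α) q
      = ((fderiv ℝ F (f q) + A α).comp
          (mfderiv 𝓘(ℝ, Fin n → ℝ) 𝓘(ℝ, Fin m → ℝ) f q)) := by
    intro α q
    have hGd : DifferentiableAt ℝ (fun x => F x + A α x) (f q) :=
      (hFd _ (hfU q)).add ((A α).differentiableAt)
    have hcomp : g α = (fun x => F x + A α x) ∘ f := rfl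
    rw [hcomp, mfderiv_comp q hGd.mdifferentiableAt ((hf q).mdifferentiableAt (by simp))]
    congr 1
    rw [mfderiv_eq_fderiv, fderiv_fun_add (hFd _ (hfU q)) ((A α).differentiableAt),
      (A α).fderiv]
  -- finite chart cover
  obtain ⟨T, hT⟩ : ∃ T : Finset N, ∀ q : N, ∃ q0 ∈ T,
      q ∈ (chartAt (Fin n → ℝ) q0).source := by
    obtain ⟨T, hT⟩ := IsCompact.elim_finite_subcover isCompact_univ
      (fun q0 : N => (chartAt (Fin n → ℝ) q0).source)
      (fun q0 => (chartAt (Fin n → ℝ) q0).open_source)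
      (fun q _ => mem_iUnion.2 ⟨q, mem_chart_source _ q⟩)
    exact ⟨T, fun q => by simpa using hT (mem_univ q)⟩
  set e : N → PartialEquiv N (Fin n → ℝ) :=
    fun q0 => extChartAt 𝓘(ℝ, Fin n → ℝ) q0 with he
  set hc : N → (Fin n → ℝ) → (Fin m → ℝ) := fun q0 => f ∘ (e q0).symm with hhc
  have hsrc_eq : ∀ q0 : N, (e q0).source = (chartAt (Fin n → ℝ) q0).source := by
    intro q0; rw [he]; exact extChartAt_source 𝓘(ℝ, Fin n → ℝ) q0
  have htar_open : ∀ q0 : N, IsOpen (e q0).target := by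
    intro q0; rw [he]; exact isOpen_extChartAt_target q0
  have hmemtar : ∀ (q0 q : N), q ∈ (chartAt (Fin n → ℝ) q0).source →
      e q0 q ∈ (e q0).target := by
    intro q0 q hq
    exact (e q0).map_source (by rw [hsrc_eq]; exact hq)
  have hfq : ∀ (q0 q : N), q ∈ (chartAt (Fin n → ℝ) q0).source →
      hc q0 (e q0 q) = f q := by
    intro q0 q hq
    simp only [hhc, Function.comp_apply]
    rw [(e q0).left_inv (by rw [hsrc_eq]; exact hq)]
  have hh : ∀ q0 : N, ContDiffOn ℝ ((⊤ : ℕ∞) : WithTop ℕ∞) (hc q0) (e q0).target := by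
    intro q0
    have h1 : ContMDiffOn 𝓘(ℝ, Fin n → ℝ) 𝓘(ℝ, Fin n → ℝ) (⊤ : ℕ∞)
        (e q0).symm (e q0).target := contMDiffOn_extChartAt_symm q0
    exact contMDiffOn_iff_contDiffOn.1 (hf.comp_contMDiffOn h1)
  have hkey : ∀ (q0 q : N), q ∈ (chartAt (Fin n → ℝ) q0).source →
      mfderiv 𝓘(ℝ, Fin n → ℝ) 𝓘(ℝ, Fin m → ℝ) f q =
      (fderiv ℝ (hc q0) (e q0 q)).comp
        (mfderiv 𝓘(ℝ, Fin n → ℝ) 𝓘(ℝ, Fin n → ℝ) (e q0) q) := by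
    intro q0 q hq
    have heq : f =ᶠ[nhds q] (hc q0) ∘ (e q0) := by
      filter_upwards [(chartAt (Fin n → ℝ) q0).open_source.mem_nhds hq] with x hx
      exact (hfq q0 x hx).symm
    have hdh : DifferentiableAt ℝ (hc q0) (e q0 q) :=
      ((hh q0).contDiffAt ((htar_open q0).mem_nhds (hmemtar q0 q hq))).differentiableAt
        (by simp)
    rw [heq.mfderiv_eq, mfderiv_comp q hdh.mdifferentiableAt
      (mdifferentiableAt_extChartAt hq)]
    congr 1
    exact mfderiv_eq_fderiv
  -- the bad set
  set Sig : Set (Fin ℓ → Fin m → ℝ) :=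
    {α | ¬ Function.Injective (g α)} ∪
    {α | ∃ q, ¬ Function.Injective
      (mfderiv 𝓘(ℝ, Fin n → ℝ) 𝓘(ℝ, Fin ℓ → ℝ) (g α) q)} with hSig
  refine ⟨Sig, ?_, ?_⟩
  · -- `Sig` is volume-null
    -- the covering maps
    have hle1 : (1 : WithTop ℕ∞) ≤ ((⊤ : ℕ∞) : WithTop ℕ∞) := by exact_mod_cast le_top
    have hle2 : (1 : WithTop ℕ∞) + 1 ≤ ((⊤ : ℕ∞) : WithTop ℕ∞) := by
      rw [show ((1 : WithTop ℕ∞) + 1) = ((2 : ℕ∞) : WithTop ℕ∞) from rfl]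
      exact_mod_cast le_top
    have hβ : ∀ (i : Fin ℓ) (j : Fin m), ContDiff ℝ 1
        (fun p : (Fin n → ℝ) × (Fin n → ℝ) × (Fin ℓ → Fin m → ℝ) => p.2.2 i j) := by
      intro i j
      exact contDiff_pi.1 (contDiff_pi.1 (contDiff_snd.comp contDiff_snd) i) j
    set Ψ1 : N → N → Fin m →
        ((Fin n → ℝ) × (Fin n → ℝ) × (Fin ℓ → Fin m → ℝ)) → (Fin ℓ → Fin m → ℝ) :=
      fun q0 q1 j0 p => fun i j => if j = j0 then
        ((F (hc q1 p.2.1) i - F (hc q0 p.1) i)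
          - ∑ j', p.2.2 i j' * (hc q0 p.1 j' - hc q1 p.2.1 j'))
          / (hc q0 p.1 j0 - hc q1 p.2.1 j0)
        else p.2.2 i j with hΨ1
    set D1 : N → N → Fin m →
        Set ((Fin n → ℝ) × (Fin n → ℝ) × (Fin ℓ → Fin m → ℝ)) :=
      fun q0 q1 j0 => {p | p.1 ∈ (e q0).target ∧ p.2.1 ∈ (e q1).target ∧
        hc q0 p.1 ∈ U ∧ hc q1 p.2.1 ∈ U ∧ (hc q0 p.1 j0 - hc q1 p.2.1 j0) ≠ 0} with hD1
    set Ψ2 : N → Fin m →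
        ((Fin n → ℝ) × (Fin n → ℝ) × (Fin ℓ → Fin m → ℝ)) → (Fin ℓ → Fin m → ℝ) :=
      fun q0 j0 p => fun i j => if j = j0 then
        ((-(fderiv ℝ F (hc q0 p.1) (fderiv ℝ (hc q0) p.1 p.2.1) i))
          - ∑ j', p.2.2 i j' * fderiv ℝ (hc q0) p.1 p.2.1 j')
          / fderiv ℝ (hc q0) p.1 p.2.1 j0
        else p.2.2 i j with hΨ2
    set D2 : N → Fin m →
        Set ((Fin n → ℝ) × (Fin n → ℝ) × (Fin ℓ → Fin m → ℝ)) :=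
      fun q0 j0 => {p | p.1 ∈ (e q0).target ∧ hc q0 p.1 ∈ U ∧
        fderiv ℝ (hc q0) p.1 p.2.1 j0 ≠ 0} with hD2
    -- continuity/differentiability of the pieces
    have hx0 : ∀ (q0 : N) D, (∀ p ∈ D, p.1 ∈ (e q0).target) → ContDiffOn ℝ 1
        (fun p : (Fin n → ℝ) × (Fin n → ℝ) × (Fin ℓ → Fin m → ℝ) => hc q0 p.1) D := by
      intro q0 D hD
      exact ((hh q0).of_le hle1).comp (contDiff_fst.contDiffOn) hD
    have hx1 : ∀ (q1 : N) D, (∀ p ∈ D, p.2.1 ∈ (e q1).target) → ContDiffOn ℝ 1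
        (fun p : (Fin n → ℝ) × (Fin n → ℝ) × (Fin ℓ → Fin m → ℝ) => hc q1 p.2.1) D := by
      intro q1 D hD
      exact ((hh q1).of_le hle1).comp ((contDiff_fst.comp contDiff_snd).contDiffOn) hD
    have hu2cd : ∀ (q0 : N) (D : Set ((Fin n → ℝ) × (Fin n → ℝ) × (Fin ℓ → Fin m → ℝ))),
        (∀ p ∈ D, p.1 ∈ (e q0).target) → ContDiffOn ℝ 1
        (fun p : (Fin n → ℝ) × (Fin n → ℝ) × (Fin ℓ → Fin m → ℝ) =>
          fderiv ℝ (hc q0) p.1 p.2.1) D := by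
      intro q0 D hD
      have hdf : ContDiffOn ℝ 1 (fun a => fderiv ℝ (hc q0) a) (e q0).target :=
        (hh q0).fderiv_of_isOpen (htar_open q0) hle2
      exact (hdf.comp contDiff_fst.contDiffOn hD).clm_apply
        ((contDiff_fst.comp contDiff_snd).contDiffOn)
    -- each `Ψ1` image is null
    have hW1 : ∀ (q0 q1 : N) (j0 : Fin m),
        volume (Ψ1 q0 q1 j0 '' (D1 q0 q1 j0 ∩ {p | ∀ i, p.2.2 i j0 = 0})) = 0 := by
      intro q0 q1 j0
      have hD1open : IsOpen (D1 q0 q1 j0) := by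
        have hO : IsOpen ((e q0).target ×ˢ ((e q1).target ×ˢ
            (univ : Set (Fin ℓ → Fin m → ℝ)))) :=
          (htar_open q0).prod ((htar_open q1).prod isOpen_univ)
        have hOsub1 : ∀ p ∈ ((e q0).target ×ˢ ((e q1).target ×ˢ
            (univ : Set (Fin ℓ → Fin m → ℝ)))), p.1 ∈ (e q0).target := fun p hp => hp.1
        have hOsub2 : ∀ p ∈ ((e q0).target ×ˢ ((e q1).target ×ˢ
            (univ : Set (Fin ℓ → Fin m → ℝ)))), p.2.1 ∈ (e q1).target := fun p hp => hp.2.1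
        have hφ : ContinuousOn (fun p : (Fin n → ℝ) × (Fin n → ℝ) × (Fin ℓ → Fin m → ℝ) =>
            (hc q0 p.1, hc q1 p.2.1)) ((e q0).target ×ˢ ((e q1).target ×ˢ univ)) :=
          ((hx0 q0 _ hOsub1).continuousOn).prodMk ((hx1 q1 _ hOsub2).continuousOn)
        have hV : IsOpen {w : (Fin m → ℝ) × (Fin m → ℝ) |
            w.1 ∈ U ∧ w.2 ∈ U ∧ w.1 j0 - w.2 j0 ≠ 0} := by
          have hc1 : Continuous fun w : (Fin m → ℝ) × (Fin m → ℝ) => w.1 j0 - w.2 j0 :=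
            ((continuous_apply j0).comp continuous_fst).sub
              ((continuous_apply j0).comp continuous_snd)
          have : {w : (Fin m → ℝ) × (Fin m → ℝ) |
              w.1 ∈ U ∧ w.2 ∈ U ∧ w.1 j0 - w.2 j0 ≠ 0}
              = (U ×ˢ U) ∩ ((fun w : (Fin m → ℝ) × (Fin m → ℝ) => w.1 j0 - w.2 j0) ⁻¹'
                ({0}ᶜ)) := by
            ext w; simp [and_assoc]
          rw [this]
          exact (hU.prod hU).inter (isOpen_compl_singleton.preimage hc1)
        have : D1 q0 q1 j0 = ((e q0).target ×ˢ ((e q1).target ×ˢ univ)) ∩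
            ((fun p : (Fin n → ℝ) × (Fin n → ℝ) × (Fin ℓ → Fin m → ℝ) =>
              (hc q0 p.1, hc q1 p.2.1)) ⁻¹' {w | w.1 ∈ U ∧ w.2 ∈ U ∧ w.1 j0 - w.2 j0 ≠ 0}) := by
          ext p
          simp only [hD1, mem_setOf_eq, mem_inter_iff, mem_preimage, mem_prod, mem_univ, and_true]
          tauto
        rw [this]
        exact hφ.isOpen_inter_preimage hO hV
      have hΨ1smooth : ContDiffOn ℝ 1 (Ψ1 q0 q1 j0) (D1 q0 q1 j0) := by
        have hcx0 := hx0 q0 (D1 q0 q1 j0) (fun p hp => hp.1)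
        have hcx1 := hx1 q1 (D1 q0 q1 j0) (fun p hp => hp.2.1)
        have hFx0 : ContDiffOn ℝ 1
            (fun p : (Fin n → ℝ) × (Fin n → ℝ) × (Fin ℓ → Fin m → ℝ) =>
              F (hc q0 p.1)) (D1 q0 q1 j0) :=
          (hF.of_le (by simp)).comp hcx0 (fun p hp => hp.2.2.1)
        have hFx1 : ContDiffOn ℝ 1
            (fun p : (Fin n → ℝ) × (Fin n → ℝ) × (Fin ℓ → Fin m → ℝ) =>
              F (hc q1 p.2.1)) (D1 q0 q1 j0) :=
          (hF.of_le (by simp)).comp hcx1 (fun p hp => hp.2.2.2.1)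
        refine contDiffOn_pi.2 fun i => contDiffOn_pi.2 fun j => ?_
        by_cases hj : j = j0
        · simp only [hΨ1, hj, if_true, eq_self_iff_true]
          refine ContDiffOn.div ?_ ?_ (fun p hp => hp.2.2.2.2)
          · refine ContDiffOn.sub ?_ ?_
            · exact (contDiffOn_pi.1 hFx1 i).sub (contDiffOn_pi.1 hFx0 i)
            · refine ContDiffOn.sum fun j' _ => ?_
              exact ((hβ i j').contDiffOn).mul
                ((contDiffOn_pi.1 hcx0 j').sub (contDiffOn_pi.1 hcx1 j'))
          · exact (contDiffOn_pi.1 hcx0 j0).sub (contDiffOn_pi.1 hcx1 j0)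
        · simp only [hΨ1, hj, if_false]
          exact (hβ i j).contDiffOn
      exact aux_engine hl j0 hD1open hΨ1smooth
    have hW2 : ∀ (q0 : N) (j0 : Fin m),
        volume (Ψ2 q0 j0 '' (D2 q0 j0 ∩ {p | ∀ i, p.2.2 i j0 = 0})) = 0 := by
      intro q0 j0
      have hD2open : IsOpen (D2 q0 j0) := by
        have hOsub : ∀ p ∈ ((e q0).target ×ˢ
            (univ : Set ((Fin n → ℝ) × (Fin ℓ → Fin m → ℝ)))),
            p.1 ∈ (e q0).target := fun p hp => hp.1
        have hO : IsOpen ((e q0).target ×ˢ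
            (univ : Set ((Fin n → ℝ) × (Fin ℓ → Fin m → ℝ)))) :=
          (htar_open q0).prod isOpen_univ
        have hφ : ContinuousOn (fun p : (Fin n → ℝ) × (Fin n → ℝ) × (Fin ℓ → Fin m → ℝ) =>
            (hc q0 p.1, fderiv ℝ (hc q0) p.1 p.2.1 j0))
            ((e q0).target ×ˢ univ) :=
          ((hx0 q0 _ hOsub).continuousOn).prodMk
            ((contDiffOn_pi.1 (hu2cd q0 _ hOsub) j0).continuousOn)
        have hV : IsOpen {w : (Fin m → ℝ) × ℝ | w.1 ∈ U ∧ w.2 ≠ 0} := by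
          have : {w : (Fin m → ℝ) × ℝ | w.1 ∈ U ∧ w.2 ≠ 0} = U ×ˢ ({(0:ℝ)}ᶜ) := by
            ext w; simp [Set.mem_prod]
          rw [this]
          exact hU.prod isOpen_compl_singleton
        have : D2 q0 j0 = ((e q0).target ×ˢ univ) ∩
            ((fun p : (Fin n → ℝ) × (Fin n → ℝ) × (Fin ℓ → Fin m → ℝ) =>
              (hc q0 p.1, fderiv ℝ (hc q0) p.1 p.2.1 j0)) ⁻¹'
                {w : (Fin m → ℝ) × ℝ | w.1 ∈ U ∧ w.2 ≠ 0}) := by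
          ext p
          simp only [hD2, mem_setOf_eq, mem_inter_iff, mem_preimage, mem_prod, mem_univ, and_true]
        rw [this]
        exact hφ.isOpen_inter_preimage hO hV
      have hΨ2smooth : ContDiffOn ℝ 1 (Ψ2 q0 j0) (D2 q0 j0) := by
        have hcx0 := hx0 q0 (D2 q0 j0) (fun p hp => hp.1)
        have hcu := hu2cd q0 (D2 q0 j0) (fun p hp => hp.1)
        have hw : ContDiffOn ℝ 1
            (fun p : (Fin n → ℝ) × (Fin n → ℝ) × (Fin ℓ → Fin m → ℝ) =>
              fderiv ℝ F (hc q0 p.1) (fderiv ℝ (hc q0) p.1 p.2.1)) (D2 q0 j0) := by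
          refine ContDiffOn.clm_apply ?_ hcu
          exact (hF.fderiv_of_isOpen hU hle2).comp hcx0 (fun p hp => hp.2.1)
        refine contDiffOn_pi.2 fun i => contDiffOn_pi.2 fun j => ?_
        by_cases hj : j = j0
        · simp only [hΨ2, hj, if_true, eq_self_iff_true]
          refine ContDiffOn.div ?_ ?_ (fun p hp => hp.2.2)
          · refine ContDiffOn.sub ?_ ?_
            · exact (contDiffOn_pi.1 hw i).neg
            · refine ContDiffOn.sum fun j' _ => ?_
              exact ((hβ i j').contDiffOn).mul (contDiffOn_pi.1 hcu j')
          · exact contDiffOn_pi.1 hcu j0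
        · simp only [hΨ2, hj, if_false]
          exact (hβ i j).contDiffOn
      exact aux_engine hl j0 hD2open hΨ2smooth
    -- coverage
    have hcover : Sig ⊆
        (⋃ q0 ∈ T, ⋃ q1 ∈ T, ⋃ j0 : Fin m,
          Ψ1 q0 q1 j0 '' (D1 q0 q1 j0 ∩ {p | ∀ i, p.2.2 i j0 = 0})) ∪
        (⋃ q0 ∈ T, ⋃ j0 : Fin m,
          Ψ2 q0 j0 '' (D2 q0 j0 ∩ {p | ∀ i, p.2.2 i j0 = 0})) := by
      intro α hα
      rw [hSig] at hα
      obtain hα | hα := hα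
      · -- failure of injectivity of `g α`
        rw [mem_setOf_eq] at hα
        obtain ⟨p, q, hgpq, hpq⟩ := Function.not_injective_iff.1 hα
        have hfpq : f p ≠ f q := fun hEq => hpq (htop.injective hEq)
        obtain ⟨j0, hj0⟩ : ∃ j0, f p j0 - f q j0 ≠ 0 := by
          by_contra hcon
          push_neg at hcon
          exact hfpq (funext fun j => by have := hcon j; linarith)
        obtain ⟨q0, hq0T, hp0⟩ := hT p
        obtain ⟨q1, hq1T, hq1⟩ := hT q
        have hsum : ∀ i, ∑ j', α i j' * (f p j' - f q j')
            = F (f q) i - F (f p) i := by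
          intro i
          have h1 : F (f p) i + A α (f p) i = F (f q) i + A α (f q) i := by
            have := congrFun hgpq i
            simpa [hg, Pi.add_apply] using this
          have h2 : A α (f p) i - A α (f q) i
              = ∑ j', α i j' * (f p j' - f q j') := by
            rw [hAapp, hAapp, ← Finset.sum_sub_distrib]
            exact Finset.sum_congr rfl fun j' _ => by ring
          linarith
        refine mem_union_left _ ?_
        refine mem_biUnion hq0T ?_
        refine mem_biUnion hq1T ?_
        refine mem_iUnion.2 ⟨j0, ?_⟩
        refine ⟨(e q0 p, e q1 q, fun i j => if j = j0 then 0 else α i j), ⟨?_, ?_⟩, ?_⟩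
        · simp only [hD1, mem_setOf_eq]
          refine ⟨hmemtar q0 p hp0, hmemtar q1 q hq1, ?_, ?_, ?_⟩
          · rw [hfq q0 p hp0]; exact hfU p
          · rw [hfq q1 q hq1]; exact hfU q
          · rw [hfq q0 p hp0, hfq q1 q hq1]; exact hj0
        · intro i
          simp
        · funext i j
          have hsc := solve_col α (fun j' => f p j' - f q j')
            (fun i => F (f q) i - F (f p) i) j0 hj0 hsum i j
          simp only [hΨ1, hfq q0 p hp0, hfq q1 q hq1]
          exact hsc
      · -- failure of injectivity of a differential
        rw [mem_setOf_eq] at hα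
        obtain ⟨q, hninj⟩ := hα
        rw [hmfd α q] at hninj
        obtain ⟨v, w, heq2, hvw⟩ := Function.not_injective_iff.1 hninj
        have hv0 : v - w ≠ 0 := sub_ne_zero.2 hvw
        have hmap0 : (fderiv ℝ F (f q) + A α)
            (mfderiv 𝓘(ℝ, Fin n → ℝ) 𝓘(ℝ, Fin m → ℝ) f q (v - w)) = 0 := by
          have h3 : ((fderiv ℝ F (f q) + A α).comp
              (mfderiv 𝓘(ℝ, Fin n → ℝ) 𝓘(ℝ, Fin m → ℝ) f q)) (v - w) = 0 := by
            rw [map_sub]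
            exact sub_eq_zero_of_eq heq2
          exact h3
        set u := mfderiv 𝓘(ℝ, Fin n → ℝ) 𝓘(ℝ, Fin m → ℝ) f q (v - w) with hu_def
        have hu : u ≠ 0 := fun h0 => hv0 (himm q (by rw [map_zero]; exact h0))
        obtain ⟨j0, hj0⟩ : ∃ j0, u j0 ≠ 0 := by
          by_contra hcon
          push_neg at hcon
          exact hu (funext fun j => hcon j)
        obtain ⟨q0, hq0T, hq0s⟩ := hT q
        have hu_eq : u = fderiv ℝ (hc q0) (e q0 q)
            (mfderiv 𝓘(ℝ, Fin n → ℝ) 𝓘(ℝ, Fin n → ℝ) (e q0) q (v - w)) := by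
          rw [hu_def, hkey q0 q hq0s]
          rfl
        have hsum : ∀ i, ∑ j, α i j * u j = -(fderiv ℝ F (f q) u i) := by
          intro i
          have h4 : fderiv ℝ F (f q) u i + A α u i = 0 := by
            have h5 := congrFun hmap0 i
            exact h5
          have h6 : A α u i = ∑ j, α i j * u j := by exact congrFun (hAapp α u) i
          linarith
        refine mem_union_right _ ?_
        refine mem_biUnion hq0T ?_
        refine mem_iUnion.2 ⟨j0, ?_⟩
        refine ⟨(e q0 q, mfderiv 𝓘(ℝ, Fin n → ℝ) 𝓘(ℝ, Fin n → ℝ) (e q0) q (v - w),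
          fun i j => if j = j0 then 0 else α i j), ⟨?_, ?_⟩, ?_⟩
        · simp only [hD2, mem_setOf_eq]
          refine ⟨hmemtar q0 q hq0s, ?_, ?_⟩
          · rw [hfq q0 q hq0s]; exact hfU q
          · rw [← hu_eq]; exact hj0
        · intro i
          simp
        · funext i j
          have hsc := solve_col α u (fun i => -(fderiv ℝ F (f q) u i)) j0 hj0 hsum i j
          simp only [hΨ2, hfq q0 q hq0s, ← hu_eq]
          exact hsc
    refine measure_mono_null hcover ?_
    refine measure_union_null ?_ ?_
    · refine measure_biUnion_null_iff (T.countable_toSet) |>.2 fun q0 _ => ?_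
      refine measure_biUnion_null_iff (T.countable_toSet) |>.2 fun q1 _ => ?_
      exact measure_iUnion_null fun j0 => hW1 q0 q1 j0
    · refine measure_biUnion_null_iff (T.countable_toSet) |>.2 fun q0 _ => ?_
      exact measure_iUnion_null fun j0 => hW2 q0 j0
  · intro α hα
    rw [hSig, mem_union] at hα
    push_neg at hα
    obtain ⟨hα1, hα2⟩ := hα
    rw [mem_setOf_eq, not_not] at hα1
    have hα2' : ∀ q, Function.Injective
        (mfderiv 𝓘(ℝ, Fin n → ℝ) 𝓘(ℝ, Fin ℓ → ℝ) (g α) q) := by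
      intro q
      by_contra hcon
      exact hα2 ⟨q, hcon⟩
    rw [hg_eq]
    exact ⟨hgsmooth α, hα2',
      ((hgsmooth α).continuous.isClosedEmbedding hα1).isEmbedding⟩
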